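/- arXiv:1201.1011 — 2 statements merged into one kernel-verified Lean document; each statement's English description precedes it below -/
import Mathlib

section
/- Let X and Y be continuous vector fields on ℝ² and p ∈ D = {y = 0} a point with Xf(p)·Yf(p) > 0, where f(x,y) = y and Xf = ⟨∇f, X⟩. Then for any transition function φ there exist a neighborhood V of p and ε₀ > 0 such that for all 0 < ε ≤ ε₀, the regularized field Z_ε = (1-φ_ε(f))Y + φ_ε(f)X has no zeros in V. -/
/-- Near a sewing point p (p.2 = 0, (Xf)(p)·(Yf)(p) > 0) the regularized
field Z_ε = (1-φ_ε(f))Y + φ_ε(f)X has no zeros, for all small ε > 0. -/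
theorem no_zeros_near_sewing_point (X Y : ℝ × ℝ → ℝ × ℝ)
    (hX : Continuous X) (hY : Continuous Y)
    (p : ℝ × ℝ) (hp : p.2 = 0)
    (hsew : ((X p).2) * ((Y p).2) > 0)
    (φ : ℝ → ℝ)
    (hsmooth : ContDiff ℝ (⊤ : ℕ∞) φ)
    (h0 : ∀ t : ℝ, t ≤ -1 → φ t = 0)
    (h1 : ∀ t : ℝ, 1 ≤ t → φ t = 1)
    (hrange : ∀ t : ℝ, 0 ≤ φ t ∧ φ t ≤ 1) :
    ∃ V ∈ nhds p, ∃ ε₀ > (0 : ℝ), ∀ ε : ℝ, 0 < ε → ε ≤ ε₀ → ∀ q ∈ V,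
      (1 - φ (q.2 / ε)) • Y q + φ (q.2 / ε) • X q ≠ 0 := by
  have hcont : Continuous fun q : ℝ × ℝ => (X q).2 * (Y q).2 :=
    (continuous_snd.comp hX).mul (continuous_snd.comp hY)
  refine ⟨{q | (X q).2 * (Y q).2 > 0}, (isOpen_lt continuous_const hcont).mem_nhds hsew,
    1, one_pos, ?_⟩
  intro ε hε hε' q hq hzero
  have hq' : (X q).2 * (Y q).2 > 0 := hq
  obtain ⟨ht0, ht1⟩ := hrange (q.2 / ε)
  have h2 : (1 - φ (q.2 / ε)) * (Y q).2 + φ (q.2 / ε) * (X q).2 = 0 := by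
    have := congrArg Prod.snd hzero
    simpa using this
  set t := φ (q.2 / ε) with ht
  set a := (Y q).2 with ha
  set b := (X q).2 with hb
  have e1 : ((1 - t) * a + t * b) * a = 0 := by rw [h2]; ring
  have e2 : ((1 - t) * a + t * b) * b = 0 := by rw [h2]; ring
  nlinarith [mul_nonneg (sub_nonneg.mpr ht1) (mul_self_nonneg a),
    mul_nonneg ht0 (mul_self_nonneg b), e1, e2]
end

section
/- Let g: ℝ → ℝ be continuous with g(p) = 0 for some p, and suppose g is differentiable at p with g'(p) ≠ 0 (a hyperbolic zero). Then there exist k > 0 and a neighborhood of p such that any continuous function ĝ with |ĝ − g| < k in C¹-norm on an interval around p has exactly one zero p̂ near p, and sign(ĝ'(p̂)) = sign(g'(p)). Applied to g = det[X,Y]|_D, this shows that a hyperbolic singular point of the Filippov field F_Z persists with the same type (saddle or node) under small C¹ perturbations of Z = (X,Y). -/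
/-!
Say g'(p) > 0 (otherwise replace g by -g). By continuity of g', on a small interval
[p - δ, p + δ] we have g' > 3g'(p)/4, so a perturbation ĝ that is C¹-closer than g'(p)/4
has ĝ' > g'(p)/2 there and is strictly increasing. The mean value inequality then pushes
ĝ(p ± δ) at least g'(p)δ/2 away from ĝ(p), while ĝ(p) is within g'(p)δ/4 of g(p) = 0,
so ĝ changes sign on the interval: it has exactly one zero there, where ĝ' > 0.
-/

open Set

def ZeroPersists (g : ℝ → ℝ) (p k δ : ℝ) : Prop :=
  ∀ ghat : ℝ → ℝ, ContDiffOn ℝ 1 ghat (Icc (p - δ) (p + δ)) →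
    (∀ x ∈ Icc (p - δ) (p + δ), |ghat x - g x| < k ∧ |deriv ghat x - deriv g x| < k) →
    ∃ phat ∈ Icc (p - δ) (p + δ), ghat phat = 0 ∧
      Real.sign (deriv ghat phat) = Real.sign (deriv g p) ∧
      ∀ x ∈ Icc (p - δ) (p + δ), ghat x = 0 → x = phat

lemma ContinuousAt.exists_forall_Icc_lt {f : ℝ → ℝ} {p c : ℝ} (hf : ContinuousAt f p)
    (hc : c < f p) : ∃ δ > 0, ∀ x ∈ Icc (p - δ) (p + δ), c < f x := by
  simpa [Real.closedBall_eq_Icc] using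
    Metric.nhds_basis_closedBall.eventually_iff.mp (hf.eventually (lt_mem_nhds hc))

lemma StrictMonoOn.existsUnique_zero_Icc {f : ℝ → ℝ} {a b : ℝ} (hab : a ≤ b)
    (hf : StrictMonoOn f (Icc a b)) (hcont : ContinuousOn f (Icc a b))
    (ha : f a ≤ 0) (hb : 0 ≤ f b) :
    ∃ x ∈ Icc a b, f x = 0 ∧ ∀ y ∈ Icc a b, f y = 0 → y = x := by
  obtain ⟨x, hx, hx0⟩ := intermediate_value_Icc hab hcont ⟨ha, hb⟩
  exact ⟨x, hx, hx0, fun y hy hy0 ↦ hf.injOn hy hx (hy0.trans hx0.symm)⟩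

lemma zeroPersists_of_deriv_pos {g : ℝ → ℝ} {p : ℝ} (hcont : ContinuousAt (deriv g) p)
    (hp : g p = 0) (hpos : 0 < deriv g p) :
    ∃ k > 0, ∃ δ > 0, ZeroPersists g p k δ := by
  set a := deriv g p
  obtain ⟨δ, hδ, hg'⟩ := hcont.exists_forall_Icc_lt (c := 3 * a / 4) (by linarith)
  refine ⟨min (a / 4) (a * δ / 4), by positivity, δ, hδ, fun ghat hC hclose ↦ ?_⟩
  have hk₁ : min (a / 4) (a * δ / 4) ≤ a / 4 := min_le_left _ _
  have hk₂ : min (a / 4) (a * δ / 4) ≤ a * δ / 4 := min_le_right _ _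
  have hderiv : ∀ x ∈ Icc (p - δ) (p + δ), a / 2 < deriv ghat x := fun x hx ↦ by
    have := (abs_lt.mp (hclose x hx).2).1
    linarith [hg' x hx]
  have hderiv' : ∀ x ∈ interior (Icc (p - δ) (p + δ)), a / 2 ≤ deriv ghat x :=
    fun x hx ↦ (hderiv x (interior_subset hx)).le
  have hghat_cont : ContinuousOn ghat (Icc (p - δ) (p + δ)) := hC.continuousOn
  have hghat_diff : DifferentiableOn ℝ ghat (interior (Icc (p - δ) (p + δ))) :=
    (hC.differentiableOn one_ne_zero).mono interior_subset
  have hmono : StrictMonoOn ghat (Icc (p - δ) (p + δ)) :=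
    strictMonoOn_of_deriv_pos (convex_Icc _ _) hghat_cont fun x hx ↦
      (half_pos hpos).trans_le (hderiv' x hx)
  have hleft : p - δ ∈ Icc (p - δ) (p + δ) := left_mem_Icc.mpr (by linarith)
  have hright : p + δ ∈ Icc (p - δ) (p + δ) := right_mem_Icc.mpr (by linarith)
  have hcenter : p ∈ Icc (p - δ) (p + δ) := ⟨by linarith, by linarith⟩
  have hslope := (convex_Icc _ _).mul_sub_le_image_sub_of_le_deriv hghat_cont hghat_diff hderiv'
  have hghat_p := abs_lt.mp (hclose p hcenter).1
  have hleft_nonpos : ghat (p - δ) ≤ 0 := by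
    have := hslope _ hleft _ hcenter (by linarith)
    nlinarith
  have hright_nonneg : 0 ≤ ghat (p + δ) := by
    have := hslope _ hcenter _ hright (by linarith)
    nlinarith
  obtain ⟨phat, hphat, hzero, huniq⟩ :=
    hmono.existsUnique_zero_Icc (by linarith) hghat_cont hleft_nonpos hright_nonneg
  refine ⟨phat, hphat, hzero, ?_, huniq⟩
  rw [Real.sign_of_pos ((half_pos hpos).trans (hderiv phat hphat)), Real.sign_of_pos hpos]

lemma ZeroPersists.neg {g : ℝ → ℝ} {p k δ : ℝ} (h : ZeroPersists g p k δ) :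
    ZeroPersists (-g) p k δ := by
  intro ghat hC hclose
  have hclose' : ∀ x ∈ Icc (p - δ) (p + δ),
      |(-ghat) x - g x| < k ∧ |deriv (-ghat) x - deriv g x| < k := fun x hx ↦ by
    obtain ⟨h₀, h₁⟩ := hclose x hx
    simp only [Pi.neg_apply, deriv.neg'] at h₀ h₁ ⊢
    constructor <;> rw [← abs_neg]
    · convert h₀ using 2; ring
    · convert h₁ using 2; ring
  obtain ⟨phat, hphat, hzero, hsign, huniq⟩ := h (-ghat) hC.neg hclose'
  refine ⟨phat, hphat, by simpa using hzero, ?_, fun x hx hx0 ↦ huniq x hx (by simp [hx0])⟩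
  simp only [deriv.neg', Real.sign_neg] at hsign ⊢
  linarith

/-- A hyperbolic zero of a C¹ function g (g(p) = 0, g'(p) ≠ 0)
persists, with its sign type, under C¹-small perturbations: there are k > 0 and a
neighborhood [p-δ, p+δ] such that any C¹ function ĝ with |ĝ-g| < k and
|ĝ'-g'| < k on it has exactly one zero p̂ there, with sign(ĝ'(p̂)) = sign(g'(p)).
(Applied to g = det[X,Y]|_D this gives persistence of hyperbolic singular points
of the Filippov field with the same type, saddle or node.) -/
theorem hyperbolic_zero_persistence (g : ℝ → ℝ) (hg : ContDiff ℝ 1 g)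
    (p : ℝ) (hp : g p = 0) (hg' : deriv g p ≠ 0) :
    ∃ k > (0 : ℝ), ∃ δ > (0 : ℝ), ∀ ghat : ℝ → ℝ,
      ContDiffOn ℝ 1 ghat (Set.Icc (p - δ) (p + δ)) →
      (∀ x ∈ Set.Icc (p - δ) (p + δ), |ghat x - g x| < k ∧ |deriv ghat x - deriv g x| < k) →
      ∃ phat ∈ Set.Icc (p - δ) (p + δ), ghat phat = 0 ∧
        Real.sign (deriv ghat phat) = Real.sign (deriv g p) ∧
        ∀ x ∈ Set.Icc (p - δ) (p + δ), ghat x = 0 → x = phat := by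
  have hcont : ContinuousAt (deriv g) p := (hg.continuous_deriv le_rfl).continuousAt
  rcases hg'.lt_or_gt with hneg | hpos
  · obtain ⟨k, hk, δ, hδ, h⟩ := zeroPersists_of_deriv_pos (g := -g) (p := p)
      (by rw [deriv.neg']; exact hcont.neg) (by simp [hp]) (by simpa [deriv.neg'] using hneg)
    exact ⟨k, hk, δ, hδ, neg_neg g ▸ h.neg⟩
  · exact zeroPersists_of_deriv_pos hcont hp hpos
end
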